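/- Let |Φ₀ⁿ⟩ = 2^(-(n-1)/2)[ Σ_{Δ(y)≡0 mod 4} |y⟩ − Σ_{Δ(y)≡2 mod 4} |y⟩ ] and |Φ₁ⁿ⟩ = 2^(-(n-1)/2)[ Σ_{Δ(y)≡1 mod 4} |y⟩ − Σ_{Δ(y)≡3 mod 4} |y⟩ ], where Δ(y) is the Hamming weight of y ∈ {0,1}ⁿ and sums run over even-weight (resp. odd-weight) strings. Then for any 1 ≤ k < n: |Φ₀ⁿ⟩ = (1/√2)[ |Φ₀ᵏ⟩ ⊗ |Φ₀^{n−k}⟩ − |Φ₁ᵏ⟩ ⊗ |Φ₁^{n−k}⟩ ]. -/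

import Mathlib

/-- Hamming weight of a bit string. -/
def hammingWeight {n : ℕ} (y : Fin n → Bool) : ℕ :=
  (Finset.univ.filter (fun i => y i = true)).card

/-- Normalization constant `2^(-(n-1)/2) = (√2)^{-(n-1)}`. -/
noncomputable def ampl (n : ℕ) : ℂ := (((Real.sqrt 2 : ℝ) : ℂ) ^ (n - 1))⁻¹

/-- The state `|Φ₀ⁿ⟩ = 2^(-(n-1)/2)[ Σ_{Δ(y)≡0 (4)} |y⟩ − Σ_{Δ(y)≡2 (4)} |y⟩ ]`. -/
noncomputable def Phi0 (n : ℕ) : (Fin n → Bool) → ℂ := fun y =>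
  if hammingWeight y % 4 = 0 then ampl n
  else if hammingWeight y % 4 = 2 then -ampl n else 0

/-- The state `|Φ₁ⁿ⟩ = 2^(-(n-1)/2)[ Σ_{Δ(y)≡1 (4)} |y⟩ − Σ_{Δ(y)≡3 (4)} |y⟩ ]`. -/
noncomputable def Phi1 (n : ℕ) : (Fin n → Bool) → ℂ := fun y =>
  if hammingWeight y % 4 = 1 then ampl n
  else if hammingWeight y % 4 = 3 then -ampl n else 0

/-!
Write `Δ` for the Hamming weight. The amplitudes of `Φ₀ⁿ` and `Φ₁ⁿ` are `2^(-(n-1)/2)` times the real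
and imaginary parts of `i^Δ(y)`. Since `Δ` is additive under concatenation, `i^Δ(y,z) = i^Δ(y) · i^Δ(z)`,
and taking real parts gives `Re(uv) = Re u Re v - Im u Im v`; the normalisations match because
`(√2)^(k+m-1) = √2 · (√2)^(k-1) · (√2)^(m-1)` for `k, m ≥ 1`.
-/

open Complex

lemma hammingWeight_eq_sum {n : ℕ} (y : Fin n → Bool) :
    hammingWeight y = ∑ i, if y i then 1 else 0 :=
  Finset.card_filter _ _

lemma hammingWeight_append {k m : ℕ} (y : Fin k → Bool) (z : Fin m → Bool) :
    hammingWeight (Fin.append y z) = hammingWeight y + hammingWeight z := by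
  simp only [hammingWeight_eq_sum, Fin.sum_univ_add, Fin.append_left, Fin.append_right]

lemma ampl_add {k m : ℕ} (hk : 1 ≤ k) (hm : 1 ≤ m) :
    ampl (k + m) = ((Real.sqrt 2 : ℝ) : ℂ)⁻¹ * (ampl k * ampl m) := by
  rw [ampl, ampl, ampl, show k + m - 1 = 1 + ((k - 1) + (m - 1)) by omega, pow_add, pow_one,
    pow_add, mul_inv, mul_inv]

lemma Phi0_eq_re_I_pow {n : ℕ} (y : Fin n → Bool) :
    Phi0 n y = ampl n * ((I ^ hammingWeight y).re : ℂ) := by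
  rw [Phi0, I_pow_eq_pow_mod]
  have : hammingWeight y % 4 < 4 := Nat.mod_lt _ (by norm_num)
  interval_cases hammingWeight y % 4 <;> simp [pow_succ]

lemma Phi1_eq_im_I_pow {n : ℕ} (y : Fin n → Bool) :
    Phi1 n y = ampl n * ((I ^ hammingWeight y).im : ℂ) := by
  rw [Phi1, I_pow_eq_pow_mod]
  have : hammingWeight y % 4 < 4 := Nat.mod_lt _ (by norm_num)
  interval_cases hammingWeight y % 4 <;> simp [pow_succ]

/-- Decomposition identity: `|Φ₀^{k+m}⟩ = (1/√2)[ |Φ₀ᵏ⟩⊗|Φ₀ᵐ⟩ − |Φ₁ᵏ⟩⊗|Φ₁ᵐ⟩ ]`,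
expressed amplitude-wise on the concatenation of bit strings. -/
theorem stmt18 (k m : ℕ) (hk : 1 ≤ k) (hm : 1 ≤ m)
    (y : Fin k → Bool) (z : Fin m → Bool) :
    Phi0 (k + m) (Fin.append y z) =
      ((Real.sqrt 2 : ℝ) : ℂ)⁻¹ * (Phi0 k y * Phi0 m z - Phi1 k y * Phi1 m z) := by
  rw [Phi0_eq_re_I_pow, hammingWeight_append, pow_add, mul_re, ampl_add hk hm,
    Phi0_eq_re_I_pow, Phi0_eq_re_I_pow, Phi1_eq_im_I_pow, Phi1_eq_im_I_pow]
  push_cast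
  ring
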